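/- If E is a bounded subset of ℝ^d with upper box dimension \overline{dim}_B E = 0, then its quasi-Assouad dimension is also zero: dim_qA E = 0. -/

import Mathlib

open Metric Filter Set
open scoped ENNReal

/-- `N_r(A)`: the least number of closed balls of radius `r` needed to cover `A`. -/
noncomputable def coverNum {X : Type*} [PseudoMetricSpace X] (A : Set X) (r : ℝ) : ℕ :=
  sInf {n : ℕ | ∃ S : Finset X, S.card = n ∧ A ⊆ ⋃ x ∈ S, closedBall x r}

/-- `N_{r,R}(E) = sup_{x ∈ E} N_r(E ∩ B(x,R))`. -/
noncomputable def coverNumLoc {X : Type*} [PseudoMetricSpace X] (E : Set X) (r R : ℝ) : ℕ :=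
  sSup {n : ℕ | ∃ x ∈ E, n = coverNum (E ∩ closedBall x R) r}

/-- Upper box dimension `limsup_{r → 0⁺} log N_r(E) / log (1/r)`. -/
noncomputable def upperBoxDim {X : Type*} [PseudoMetricSpace X] (E : Set X) : ℝ :=
  limsup (fun r : ℝ => Real.log (coverNum E r) / Real.log (1 / r)) (nhdsWithin 0 (Ioi 0))

/-- Lower box dimension `liminf_{r → 0⁺} log N_r(E) / log (1/r)`. -/
noncomputable def lowerBoxDim {X : Type*} [PseudoMetricSpace X] (E : Set X) : ℝ :=
  liminf (fun r : ℝ => Real.log (coverNum E r) / Real.log (1 / r)) (nhdsWithin 0 (Ioi 0))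

/-- `h̄_E(δ)`: the infimum of all `α ≥ 0` such that for some `b, c > 0`,
`N_{r,R}(E) ≤ c (R/r)^α` whenever `0 < r ≤ R^{1+δ} ≤ R ≤ b`. -/
noncomputable def hUpper {X : Type*} [PseudoMetricSpace X] (E : Set X) (δ : ℝ) : ℝ :=
  sInf {α : ℝ | 0 ≤ α ∧ ∃ b c : ℝ, 0 < b ∧ 0 < c ∧ ∀ r R : ℝ,
    0 < r → r ≤ R ^ (1 + δ) → R ^ (1 + δ) ≤ R → R ≤ b →
    (coverNumLoc E r R : ℝ) ≤ c * (R / r) ^ α}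

/-- `h̲_E(δ)`: the supremum of all `α ≥ 0` such that for some `b, c > 0`,
`N_{r,R}(E) ≥ c (R/r)^α` whenever `0 < r ≤ R^{1+δ} ≤ R ≤ b`. -/
noncomputable def hLower {X : Type*} [PseudoMetricSpace X] (E : Set X) (δ : ℝ) : ℝ :=
  sSup {α : ℝ | 0 ≤ α ∧ ∃ b c : ℝ, 0 < b ∧ 0 < c ∧ ∀ r R : ℝ,
    0 < r → r ≤ R ^ (1 + δ) → R ^ (1 + δ) ≤ R → R ≤ b →
    c * (R / r) ^ α ≤ (coverNumLoc E r R : ℝ)}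

/-- The quasi-Assouad dimension `dim_qA E = lim_{δ → 0⁺} h̄_E(δ)`; since `h̄_E` is
nonincreasing this limit equals the supremum over `δ ∈ (0,1)`. -/
noncomputable def qADim {X : Type*} [PseudoMetricSpace X] (E : Set X) : ℝ :=
  sSup (hUpper E '' Ioo (0:ℝ) 1)

/-- The quasi-lower Assouad dimension `dim_qL E = lim_{δ → 0⁺} h̲_E(δ)`; since `h̲_E` is
nondecreasing this limit equals the infimum over `δ ∈ (0,1)`. -/
noncomputable def qLDim {X : Type*} [PseudoMetricSpace X] (E : Set X) : ℝ :=
  sInf (hLower E '' Ioo (0:ℝ) 1)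

/-- Assouad dimension `dim_A E = h̄_E(0)`. -/
noncomputable def assouadDim {X : Type*} [PseudoMetricSpace X] (E : Set X) : ℝ := hUpper E 0

/-- Lower (Assouad) dimension `dim_L E = h̲_E(0)`. -/
noncomputable def lowerAssouadDim {X : Type*} [PseudoMetricSpace X] (E : Set X) : ℝ := hLower E 0

/-!
Since `dim_B E = 0`, for every `ε > 0` we have `N_r(E) ≤ r^{-ε}` for all small `r`. Local
covering numbers are bounded by global ones, `N_{r,R}(E) ≤ N_r(E)`, and `r ≤ R^{1+δ}` gives
`R/r ≥ r^{-δ/(1+δ)}`; with `ε = αδ/(1+δ)` this yields `N_{r,R}(E) ≤ (R/r)^α` for every `α > 0`,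
so `h̄_E(δ) = 0` for every `δ > 0`.

The first step needs `log N_r(E) / log(1/r)` to be bounded above (a `limsup` in `ℝ` of a function
unbounded above is `0`). In a finite-dimensional space this follows from the packing bound
`N_r(E) ≤ ((2L + r)/r)^d` for `E` in a ball of radius `L`, obtained by comparing the Haar volumes
of disjoint balls of radius `r/2` around an `r`-separated set.
-/

open Module MeasureTheory Topology
open scoped NNReal

lemma log_div_log_one_div_le_iff {n : ℕ} {r s : ℝ} (hr₀ : 0 < r) (hr₁ : r < 1) (hs : 0 ≤ s) :
    Real.log n / Real.log (1 / r) ≤ s ↔ (n : ℝ) ≤ r⁻¹ ^ s := by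
  have hlog : 0 < Real.log r⁻¹ := Real.log_pos ((one_lt_inv₀ hr₀).2 hr₁)
  rw [one_div, div_le_iff₀ hlog]
  rcases n.eq_zero_or_pos with rfl | hn
  · simp only [Nat.cast_zero, Real.log_zero]
    exact iff_of_true (mul_nonneg hs hlog.le) (by positivity)
  · exact (Real.le_rpow_iff_log_le (by exact_mod_cast hn) (inv_pos.2 hr₀)).symm

lemma inv_rpow_le_div_rpow {r R δ α : ℝ} (hr : 0 < r) (hR : 0 ≤ R) (hδ : 0 < δ) (hα : 0 ≤ α)
    (hrR : r ≤ R ^ (1 + δ)) : r⁻¹ ^ (α * (δ / (1 + δ))) ≤ (R / r) ^ α := by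
  have hδ' : 0 < 1 + δ := by linarith
  have hroot : r ^ (1 + δ)⁻¹ ≤ R := by
    calc r ^ (1 + δ)⁻¹ ≤ (R ^ (1 + δ)) ^ (1 + δ)⁻¹ :=
          Real.rpow_le_rpow hr.le hrR (inv_nonneg.2 hδ'.le)
      _ = R := Real.rpow_rpow_inv hR hδ'.ne'
  have hbase : r⁻¹ ^ (δ / (1 + δ)) ≤ R / r := by
    calc r⁻¹ ^ (δ / (1 + δ)) = r ^ ((1 + δ)⁻¹ - 1) := by
          rw [Real.inv_rpow hr.le, ← Real.rpow_neg hr.le]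
          congr 1
          field_simp
          ring
      _ = r ^ (1 + δ)⁻¹ / r := Real.rpow_sub_one hr.ne' _
      _ ≤ R / r := by gcongr
  rw [mul_comm, Real.rpow_mul (inv_nonneg.2 hr.le)]
  exact Real.rpow_le_rpow (by positivity) hbase hα

section PseudoMetricSpace

variable {X : Type*} [PseudoMetricSpace X]

lemma coverNum_le_card {A : Set X} {r : ℝ} (S : Finset X) (h : A ⊆ ⋃ x ∈ S, closedBall x r) :
    coverNum A r ≤ S.card :=
  Nat.sInf_le ⟨S, rfl, h⟩

lemma TotallyBounded.exists_finset_subset_iUnion_closedBall {A : Set X} (hA : TotallyBounded A)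
    {r : ℝ} (hr : 0 < r) : ∃ S : Finset X, A ⊆ ⋃ x ∈ S, closedBall x r := by
  obtain ⟨t, -, ht, hAt⟩ := finite_approx_of_totallyBounded hA r hr
  refine ⟨ht.toFinset, hAt.trans fun y hy => ?_⟩
  simp only [mem_iUnion, Set.Finite.mem_toFinset] at hy ⊢
  obtain ⟨x, hx, hyx⟩ := hy
  exact ⟨x, hx, ball_subset_closedBall hyx⟩

lemma coverNum_mono {A B : Set X} {r : ℝ} (hAB : A ⊆ B) (hB : TotallyBounded B) (hr : 0 < r) :
    coverNum A r ≤ coverNum B r := by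
  obtain ⟨S₀, hS₀⟩ := hB.exists_finset_subset_iUnion_closedBall hr
  have hne : {n | ∃ S : Finset X, S.card = n ∧ B ⊆ ⋃ x ∈ S, closedBall x r}.Nonempty :=
    ⟨S₀.card, S₀, rfl, hS₀⟩
  obtain ⟨S, hcard, hS⟩ := Nat.sInf_mem hne
  exact (coverNum_le_card S (hAB.trans hS)).trans_eq hcard

lemma coverNumLoc_le_coverNum {E : Set X} {r : ℝ} (R : ℝ) (hE : TotallyBounded E) (hr : 0 < r) :
    coverNumLoc E r R ≤ coverNum E r :=
  csSup_le' fun _ ⟨_, _, hn⟩ => hn ▸ coverNum_mono inter_subset_left hE hr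

lemma coverNum_le_of_packingNumber_le {A : Set X} {ε : ℝ≥0} {n : ℕ} (h : packingNumber ε A ≤ n) :
    coverNum A ε ≤ n := by
  have hfin : packingNumber ε A ≠ ⊤ := ne_top_of_le_ne_top (ENat.natCast_ne_top n) h
  have hcard := encard_maximalSeparatedSet hfin
  have hC : (maximalSeparatedSet ε A).Finite := finite_of_encard_le_coe (hcard ▸ h)
  refine (coverNum_le_card hC.toFinset ?_).trans ?_
  · simpa using isCover_iff_subset_iUnion_closedBall.1 (isCover_maximalSeparatedSet hfin)
  · rw [← ENat.natCast_le_natCast, ← Set.Finite.encard_eq_coe_toFinset_card, hcard]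
    exact h

lemma eventually_coverNum_le_rpow_of_upperBoxDim_lt {E : Set X} {n : ℕ}
    (hpoly : ∀ᶠ r in 𝓝[>] (0 : ℝ), (coverNum E r : ℝ) ≤ r⁻¹ ^ n)
    {ε : ℝ} (hε : 0 ≤ ε) (h : upperBoxDim E < ε) :
    ∀ᶠ r in 𝓝[>] (0 : ℝ), (coverNum E r : ℝ) ≤ r⁻¹ ^ ε := by
  have hbdd : IsBoundedUnder (· ≤ ·) (𝓝[>] (0 : ℝ))
      fun r => Real.log (coverNum E r) / Real.log (1 / r) := by
    refine isBoundedUnder_of_eventually_le (a := (n : ℝ)) ?_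
    filter_upwards [hpoly, Ioo_mem_nhdsGT one_pos] with r hN hr
    rw [log_div_log_one_div_le_iff hr.1 hr.2 n.cast_nonneg, Real.rpow_natCast]
    exact hN
  filter_upwards [eventually_lt_of_limsup_lt h hbdd, Ioo_mem_nhdsGT one_pos] with r hlt hr
  exact (log_div_log_one_div_le_iff hr.1 hr.2 hε).1 hlt.le

/-- `hUpper E δ` is the infimum of the `α ≥ 0` for which this holds with some `b, c > 0`. -/
def IsLocalCoverBound (E : Set X) (δ α b c : ℝ) : Prop :=
  ∀ r R : ℝ, 0 < r → r ≤ R ^ (1 + δ) → R ^ (1 + δ) ≤ R → R ≤ b →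
    (coverNumLoc E r R : ℝ) ≤ c * (R / r) ^ α

lemma hUpper_eq_zero_of_forall_pos {E : Set X} {δ : ℝ}
    (h : ∀ α : ℝ, 0 < α → ∃ b c, 0 < b ∧ 0 < c ∧ IsLocalCoverBound E δ α b c) :
    hUpper E δ = 0 := by
  have hbdd : BddBelow {α : ℝ | 0 ≤ α ∧ ∃ b c, 0 < b ∧ 0 < c ∧ IsLocalCoverBound E δ α b c} :=
    ⟨0, fun _ hα => hα.1⟩
  refine le_antisymm (le_of_forall_gt_imp_ge_of_dense fun α hα => ?_) ?_
  · exact csInf_le hbdd ⟨hα.le, h α hα⟩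
  · exact le_csInf ⟨1, zero_le_one, h 1 one_pos⟩ fun _ hα => hα.1

lemma hUpper_eq_zero_of_eventually_coverNum_le_rpow {E : Set X} (hE : TotallyBounded E)
    (h : ∀ ε : ℝ, 0 < ε → ∀ᶠ r in 𝓝[>] (0 : ℝ), (coverNum E r : ℝ) ≤ r⁻¹ ^ ε)
    {δ : ℝ} (hδ : 0 < δ) :
    hUpper E δ = 0 := by
  refine hUpper_eq_zero_of_forall_pos fun α hα => ?_
  obtain ⟨b, hb, hbound⟩ :=
    mem_nhdsGT_iff_exists_Ioc_subset.1 (h (α * (δ / (1 + δ))) (by positivity))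
  refine ⟨b, 1, hb, one_pos, fun r R hr hrR hRR hRb => ?_⟩
  have hR : 0 < R := hr.trans_le (hrR.trans hRR)
  calc (coverNumLoc E r R : ℝ) ≤ coverNum E r := mod_cast coverNumLoc_le_coverNum R hE hr
    _ ≤ r⁻¹ ^ (α * (δ / (1 + δ))) := hbound ⟨hr, (hrR.trans hRR).trans hRb⟩
    _ ≤ (R / r) ^ α := inv_rpow_le_div_rpow hr hR.le hδ hα.le hrR
    _ = 1 * (R / r) ^ α := (one_mul _).symm

lemma qADim_eq_zero_of_forall_hUpper_eq_zero {E : Set X}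
    (h : ∀ δ ∈ Ioo (0 : ℝ) 1, hUpper E δ = 0) : qADim E = 0 := by
  rw [qADim, Set.EqOn.image_eq h, (nonempty_Ioo.2 zero_lt_one).image_const, csSup_singleton]

end PseudoMetricSpace

section FiniteDimensional

variable {V : Type*} [NormedAddCommGroup V] [NormedSpace ℝ V] [FiniteDimensional ℝ V]

lemma card_le_of_isSeparated_of_subset_closedBall {C : Finset V} {x : V} {L r : ℝ} (hL : 0 ≤ L)
    (hr : 0 < r) (hC : ↑C ⊆ closedBall x L) (hsep : IsSeparated (ENNReal.ofReal r) (C : Set V)) :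
    (C.card : ℝ) ≤ ((2 * L + r) / r) ^ finrank ℝ V := by
  let _ : MeasurableSpace V := borel V
  have _ : BorelSpace V := ⟨rfl⟩
  set μ : Measure V := Measure.addHaar
  have hdisj : (C : Set V).PairwiseDisjoint fun c => closedBall c (r / 2) :=
    fun a ha b hb hab => by
      have hab : ENNReal.ofReal r < edist a b := hsep ha hb hab
      rw [edist_dist, ENNReal.ofReal_lt_ofReal_iff_of_nonneg hr.le] at hab
      exact closedBall_disjoint_closedBall (by linarith)
  have hsub : (⋃ c ∈ C, closedBall c (r / 2)) ⊆ closedBall x (L + r / 2) :=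
    iUnion₂_subset fun c hc =>
      closedBall_subset_closedBall' (by linarith [mem_closedBall.1 (hC hc)])
  have hunit : 0 < μ.real (closedBall 0 1) :=
    ENNReal.toReal_pos (measure_closedBall_pos μ 0 one_pos).ne' measure_closedBall_lt_top.ne
  have hvol : C.card * ((r / 2) ^ finrank ℝ V * μ.real (closedBall 0 1)) ≤
      (L + r / 2) ^ finrank ℝ V * μ.real (closedBall 0 1) := by
    calc C.card * ((r / 2) ^ finrank ℝ V * μ.real (closedBall 0 1))
        = μ.real (⋃ c ∈ C, closedBall c (r / 2)) := by
          rw [measureReal_biUnion_finset hdisj (fun c _ => measurableSet_closedBall)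
            (fun c _ => measure_closedBall_lt_top.ne)]
          simp only [Measure.addHaar_real_closedBall' μ _ (half_pos hr).le, Finset.sum_const,
            nsmul_eq_mul]
      _ ≤ μ.real (closedBall x (L + r / 2)) :=
          measureReal_mono hsub measure_closedBall_lt_top.ne
      _ = (L + r / 2) ^ finrank ℝ V * μ.real (closedBall 0 1) :=
          Measure.addHaar_real_closedBall' μ _ (by positivity)
  have hcard : C.card * (r / 2) ^ finrank ℝ V ≤ (L + r / 2) ^ finrank ℝ V := by
    rw [← mul_assoc] at hvol
    exact le_of_mul_le_mul_right hvol hunit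
  calc (C.card : ℝ) ≤ (L + r / 2) ^ finrank ℝ V / (r / 2) ^ finrank ℝ V := by
        rwa [le_div_iff₀ (by positivity)]
    _ = ((2 * L + r) / r) ^ finrank ℝ V := by
        rw [← div_pow]; congr 1; field_simp

lemma packingNumber_le_of_subset_closedBall {A : Set V} {x : V} {L r : ℝ} (hL : 0 ≤ L)
    (hr : 0 < r) (hA : A ⊆ closedBall x L) :
    packingNumber r.toNNReal A ≤ ⌊((2 * L + r) / r) ^ finrank ℝ V⌋₊ := by
  set K := ⌊((2 * L + r) / r) ^ finrank ℝ V⌋₊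
  refine iSup₂_le fun C hCA => iSup_le fun hC => ?_
  by_contra! hlt
  obtain ⟨t, htC, ht⟩ := exists_subset_encard_eq (Order.add_one_le_of_lt hlt)
  have htfin : t.Finite := finite_of_encard_eq_coe (k := K + 1) (by rw [ht]; norm_cast)
  have hcard : htfin.toFinset.card = K + 1 := by
    rw [htfin.encard_eq_coe_toFinset_card] at ht
    exact_mod_cast ht
  have hsep : IsSeparated (ENNReal.ofReal r) t := hC.subset htC
  have hle := card_le_of_isSeparated_of_subset_closedBall (C := htfin.toFinset) hL hr
    (by simpa using htC.trans (hCA.trans hA)) (by simpa using hsep)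
  rw [hcard] at hle
  exact (Nat.lt_floor_add_one _).not_ge (by exact_mod_cast hle)

lemma coverNum_le_of_subset_closedBall {A : Set V} {x : V} {L r : ℝ} (hL : 0 ≤ L) (hr : 0 < r)
    (hA : A ⊆ closedBall x L) : (coverNum A r : ℝ) ≤ ((2 * L + r) / r) ^ finrank ℝ V := by
  have hcover := coverNum_le_of_packingNumber_le (packingNumber_le_of_subset_closedBall hL hr hA)
  rw [Real.coe_toNNReal _ hr.le] at hcover
  exact (Nat.cast_le.2 hcover).trans (Nat.floor_le (by positivity))

lemma eventually_coverNum_le_pow_of_isBounded {E : Set V} (hE : Bornology.IsBounded E) :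
    ∀ᶠ r in 𝓝[>] (0 : ℝ), (coverNum E r : ℝ) ≤ r⁻¹ ^ (2 * finrank ℝ V) := by
  obtain ⟨L, hEL⟩ := hE.subset_closedBall 0
  have hEL' : E ⊆ closedBall 0 (max L 0) :=
    hEL.trans (closedBall_subset_closedBall (le_max_left _ _))
  filter_upwards [Ioo_mem_nhdsGT one_pos,
    tendsto_inv_nhdsGT_zero.eventually_ge_atTop (2 * max L 0 + 1)] with r ⟨hr₀, hr₁⟩ hinv
  calc (coverNum E r : ℝ) ≤ ((2 * max L 0 + r) / r) ^ finrank ℝ V :=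
        coverNum_le_of_subset_closedBall (le_max_right _ _) hr₀ hEL'
    _ ≤ (r⁻¹ * r⁻¹) ^ finrank ℝ V := by
        rw [div_eq_mul_inv]
        gcongr
        linarith
    _ = r⁻¹ ^ (2 * finrank ℝ V) := by ring

end FiniteDimensional

/-- A bounded subset of `ℝ^d` with upper box dimension `0` has quasi-Assouad dimension `0`. -/
theorem qADim_eq_zero_of_upperBoxDim_eq_zero
    {d : ℕ} (E : Set (EuclideanSpace ℝ (Fin d)))
    (hE : Bornology.IsBounded E) (h : upperBoxDim E = 0) :
    qADim E = 0 := by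
  have htb : TotallyBounded E := hE.isCompact_closure.totallyBounded.subset subset_closure
  refine qADim_eq_zero_of_forall_hUpper_eq_zero fun δ hδ =>
    hUpper_eq_zero_of_eventually_coverNum_le_rpow htb (fun ε hε => ?_) hδ.1
  exact eventually_coverNum_le_rpow_of_upperBoxDim_lt
    (eventually_coverNum_le_pow_of_isBounded hE) hε.le (h ▸ hε)
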